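/- arXiv:2312.17024 — 2 statements merged into one kernel-verified Lean document; each statement's English description precedes it below -/
import Mathlib

section
/- Let p be a real number with 0 < p < 1, let N be a real number, and define k_α = −(1−p)² and k_β = (1−p)·((1−p)(N−1) + 2). Then the series ∑_{n=1}^∞ (k_α·n + k_β)·pⁿ·(n−1) converges and its sum equals p²·(N−1). -/
/-! Writing `m = n + 1`, the summand is `p · (kα n² + (kα + kβ) n) · pⁿ`, so the series is a
combination of `∑ n² rⁿ = r (1 + r) / (1 - r)³` and `∑ n rⁿ = r / (1 - r)²`. With the given
`kα` and `kβ` the factors `(1 - p)` cancel and only `p² (N - 1)` survives. -/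

theorem hasSum_sq_mul_geometric_of_norm_lt_one {𝕜 : Type*} [NormedField 𝕜]
    [HasSummableGeomSeries 𝕜] {r : 𝕜} (hr : ‖r‖ < 1) :
    HasSum (fun n : ℕ ↦ (n : 𝕜) ^ 2 * r ^ n) (r * (1 + r) / (1 - r) ^ 3) := by
  have hr1 : 1 - r ≠ 0 := (isUnit_one_sub_of_norm_lt_one hr).ne_zero
  -- `n² = 2 (n+2).choose 2 - 3 (n+1) + 1`
  have H := ((hasSum_choose_mul_geometric_of_norm_lt_one 2 hr).mul_left 2).sub
    ((hasSum_choose_mul_geometric_of_norm_lt_one 1 hr).mul_left 3) |>.add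
    (hasSum_geometric_of_norm_lt_one hr)
  convert! H using 1
  · funext n
    have hchoose : ((n + 2).choose 2 : 𝕜) * 2 = (n + 2) * (n + 1) := by
      have h : (n + 2).choose 2 * 2 = (n + 2) * (n + 1) := by
        simpa using (Nat.add_one_mul_choose_eq (n + 1) 1).symm
      simpa using congrArg (Nat.cast : ℕ → 𝕜) h
    rw [Nat.choose_one_right]
    push_cast
    linear_combination (-r ^ n) * hchoose
  · field_simp
    ring

/-- The key limit computation: `∑_{n=1}^∞ (kα n + kβ) pⁿ (n-1) = p² (N-1)`,
where `kα = -(1-p)²` and `kβ = (1-p)((1-p)(N-1)+2)`. The sum over `n ≥ 1` is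
expressed by shifting the index. -/
theorem sum_rle_savings (p N : ℝ) (hp0 : 0 < p) (hp1 : p < 1)
    (kα kβ : ℝ) (hkα : kα = -(1 - p) ^ 2)
    (hkβ : kβ = (1 - p) * ((1 - p) * (N - 1) + 2)) :
    HasSum (fun n : ℕ =>
        (kα * ((n : ℝ) + 1) + kβ) * p ^ (n + 1) * (((n : ℝ) + 1) - 1))
      (p ^ 2 * (N - 1)) := by
  have hr : ‖p‖ < 1 := by rwa [Real.norm_of_nonneg hp0.le]
  have H := (((hasSum_sq_mul_geometric_of_norm_lt_one hr).mul_left kα).add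
    ((hasSum_coe_mul_geometric_of_norm_lt_one hr).mul_left (kα + kβ))).mul_left p
  convert! H using 1
  · funext n
    ring
  · have hp1' : 1 - p ≠ 0 := by linarith
    subst hkα hkβ
    field_simp
    ring
end

section
/- Let S be a finite nonempty type, μ a probability measure on S, x ∈ S with μ({x}) = p, let N ≥ 3 and b_r ≥ 1 be natural numbers. Equip Ω = (Fin N → S) with the product measure of N copies of μ. For 1 ≤ n ≤ N, let C_n(ω) be the number of maximal runs of the symbol x of length exactly n in ω. Then the expected value of the random variable ∑_{n=1}^{N} C_n(ω)·(n − ⌈n/2^{b_r}⌉) equals ∑_{n=1}^{N−2} ((1−p)²·pⁿ·(N−1−n) + 2·pⁿ·(1−p))·(n − ⌈n/2^{b_r}⌉) + 2·p^{N−1}·(1−p)·(N−1 − ⌈(N−1)/2^{b_r}⌉) + p^N·(N − ⌈N/2^{b_r}⌉). -/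
/-! By linearity of expectation, `runCount x n` is the sum over the `N - n + 1` start positions
`i` of the indicators of the cylinder sets `maximalRunSet x N i n`. Such a cylinder fixes the
`n` letters of the run to `x` and its (at most two) neighbours inside `Fin N` to `≠ x`, so it
has probability `pⁿ (1 - p)^b` with `b` the number of those neighbours: two for the
`N - n - 1` interior start positions, one for the two extreme ones (if `n < N`), none if
`n = N`. -/

open MeasureTheory Finset

/-- The number of maximal runs of the symbol `x` of length exactly `n` in the
sequence `ω : Fin N → S`: the number of starting indices `i` with `0 ≤ i ≤ N - n`
such that `ω j = x` for all `i ≤ j < i + n`, the run cannot be extended on the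
left (`i = 0` or `ω (i-1) ≠ x`), and cannot be extended on the right
(`i + n = N` or `ω (i+n) ≠ x`). -/
def runCount {S : Type*} [DecidableEq S] {N : ℕ} (x : S) (n : ℕ)
    (ω : Fin N → S) : ℕ :=
  ((Finset.range (N - n + 1)).filter (fun i =>
    (∀ j : Fin N, i ≤ (j : ℕ) → (j : ℕ) < i + n → ω j = x) ∧
    (i = 0 ∨ ∀ j : Fin N, (j : ℕ) + 1 = i → ω j ≠ x) ∧
    (i + n = N ∨ ∀ j : Fin N, (j : ℕ) = i + n → ω j ≠ x))).card

def runPattern {α : Type*} (inside boundary outside : α) (i n k : ℕ) : α :=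
  if i ≤ k ∧ k < i + n then inside
  else if k + 1 = i ∨ k = i + n then boundary else outside

lemma apply_runPattern {α β : Type*} (f : α → β) (a b c : α) (i n k : ℕ) :
    f (runPattern a b c i n k) = runPattern (f a) (f b) (f c) i n k := by
  unfold runPattern; split_ifs <;> rfl

lemma prod_range_runPattern {M : Type*} [CommMonoid M] (a b : M) {N i n : ℕ}
    (h : i + n ≤ N) :
    ∏ k ∈ range N, runPattern a b 1 i n k =
      (if i = 0 then 1 else b) * a ^ n * (if i + n = N then 1 else b) := by
  obtain ⟨m, rfl⟩ := Nat.exists_eq_add_of_le h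
  have hleft : ∏ k ∈ range i, runPattern a b 1 i n k = if i = 0 then 1 else b := by
    rcases i with _ | i
    · simp
    · rw [prod_range_succ, prod_eq_one fun k hk => ?_]
      · simp [runPattern]
      · simp only [mem_range] at hk
        simp only [runPattern]
        rw [if_neg (by omega), if_neg (by omega)]
  have hmid : ∏ k ∈ range n, runPattern a b 1 i n (i + k) = a ^ n := by
    rw [prod_congr rfl fun k hk => ?_, prod_const, card_range]
    simp only [mem_range] at hk
    simp only [runPattern]
    rw [if_pos (by omega)]
  have hright : ∏ k ∈ range m, runPattern a b 1 i n (i + n + k) =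
      if i + n = i + n + m then 1 else b := by
    rcases m with _ | m
    · simp
    · rw [prod_range_succ', prod_eq_one fun k hk => ?_]
      · simp [runPattern]
      · simp only [runPattern]
        rw [if_neg (by omega), if_neg (by omega)]
  rw [prod_range_add, prod_range_add, hleft, hmid, hright]

lemma sum_range_ite_mul_ite {R : Type*} [CommRing R] (q c : R) {N n : ℕ} (h : n < N) :
    ∑ i ∈ range (N - n + 1), (if i = 0 then 1 else q) * c * (if i + n = N then 1 else q) =
      ((N : R) - 1 - n) * q ^ 2 * c + 2 * q * c := by
  obtain ⟨m, rfl⟩ : ∃ m, N = n + m + 1 := ⟨N - n - 1, by omega⟩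
  rw [show n + m + 1 - n + 1 = m + 1 + 1 by omega, sum_range_succ, sum_range_succ',
    sum_congr rfl fun i hi => by rw [if_neg (by omega), if_neg (by rw [mem_range] at hi; omega)]]
  simp only [sum_const, card_range, nsmul_eq_mul, if_pos, if_neg (by omega : m + 1 ≠ 0),
    if_pos (by omega : m + 1 + n = n + m + 1), if_neg (by omega : 0 + n ≠ n + m + 1)]
  push_cast
  ring

section

variable {S : Type*}

def maximalRunSet (x : S) (N i n : ℕ) : Set (Fin N → S) :=
  {ω | (∀ j : Fin N, i ≤ (j : ℕ) → (j : ℕ) < i + n → ω j = x) ∧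
    (i = 0 ∨ ∀ j : Fin N, (j : ℕ) + 1 = i → ω j ≠ x) ∧
    (i + n = N ∨ ∀ j : Fin N, (j : ℕ) = i + n → ω j ≠ x)}

lemma maximalRunSet_eq_pi (x : S) (N i n : ℕ) :
    maximalRunSet x N i n = Set.univ.pi fun j : Fin N => runPattern {x} {x}ᶜ Set.univ i n j := by
  ext ω
  simp only [maximalRunSet, Set.mem_ofPred_eq, Set.mem_univ_pi]
  constructor
  · rintro ⟨hrun, hleft, hright⟩ j
    unfold runPattern
    split_ifs with hin hbd
    · exact hrun j hin.1 hin.2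
    · rcases hbd with hbd | hbd
      · exact hleft.resolve_left (by omega) j hbd
      · exact hright.resolve_left (by omega) j hbd
    · trivial
  · intro h
    refine ⟨fun j h1 h2 => ?_, Or.inr fun j hj => ?_, Or.inr fun j hj => ?_⟩ <;>
      have hj' := h j <;> unfold runPattern at hj'
    · rwa [if_pos ⟨h1, h2⟩] at hj'
    · rwa [if_neg (by omega), if_pos (Or.inl hj)] at hj'
    · rwa [if_neg (by omega), if_pos (Or.inr hj)] at hj'

lemma runCount_eq_sum_indicator [DecidableEq S] (x : S) {N : ℕ} (n : ℕ) (ω : Fin N → S) :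
    (runCount x n ω : ℝ) = ∑ i ∈ range (N - n + 1), (maximalRunSet x N i n).indicator 1 ω := by
  rw [runCount, card_filter, Nat.cast_sum]
  refine sum_congr rfl fun i _ => ?_
  simp only [Set.indicator_apply, maximalRunSet, Set.mem_ofPred_eq, Pi.one_apply]
  split_ifs <;> simp

variable [MeasurableSpace S] [MeasurableSingletonClass S]

lemma measurableSet_maximalRunSet (x : S) (N i n : ℕ) :
    MeasurableSet (maximalRunSet x N i n) := by
  rw [maximalRunSet_eq_pi]
  refine MeasurableSet.univ_pi fun j => ?_
  unfold runPattern
  split_ifs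
  exacts [measurableSet_singleton x, (measurableSet_singleton x).compl, MeasurableSet.univ]

lemma measureReal_pi_maximalRunSet (μ : Measure S) [IsProbabilityMeasure μ] (x : S)
    {N i n : ℕ} (h : i + n ≤ N) :
    (Measure.pi fun _ : Fin N => μ).real (maximalRunSet x N i n) =
      (if i = 0 then 1 else 1 - μ.real {x}) * μ.real {x} ^ n *
        (if i + n = N then 1 else 1 - μ.real {x}) := by
  rw [maximalRunSet_eq_pi, measureReal_def, Measure.pi_pi, ENNReal.toReal_prod,
    Fin.prod_univ_eq_prod_range (fun k => (μ (runPattern {x} {x}ᶜ Set.univ i n k)).toReal)]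
  simp_rw [← measureReal_def, apply_runPattern μ.real,
    probReal_compl_eq_one_sub (measurableSet_singleton x), probReal_univ]
  exact prod_range_runPattern _ _ h

variable [DecidableEq S]

lemma integrable_runCount {N : ℕ} (P : Measure (Fin N → S)) [IsFiniteMeasure P]
    (x : S) (n : ℕ) : Integrable (fun ω => (runCount x n ω : ℝ)) P := by
  simp_rw [runCount_eq_sum_indicator]
  exact integrable_finsetSum _ fun i _ =>
    (integrable_const 1).indicator (measurableSet_maximalRunSet x N i n)

lemma integral_runCount {N : ℕ} (P : Measure (Fin N → S)) [IsFiniteMeasure P]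
    (x : S) (n : ℕ) :
    ∫ ω, (runCount x n ω : ℝ) ∂P = ∑ i ∈ range (N - n + 1), P.real (maximalRunSet x N i n) := by
  simp_rw [runCount_eq_sum_indicator]
  rw [integral_finsetSum _ fun i _ =>
    (integrable_const 1).indicator (measurableSet_maximalRunSet x N i n)]
  exact sum_congr rfl fun i _ => integral_indicator_one (measurableSet_maximalRunSet x N i n)

variable (μ : Measure S) [IsProbabilityMeasure μ] (x : S)

lemma integral_runCount_pi_of_lt {N n : ℕ} (h : n < N) :
    ∫ ω, (runCount x n ω : ℝ) ∂(Measure.pi fun _ : Fin N => μ) =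
      ((N : ℝ) - 1 - n) * (1 - μ.real {x}) ^ 2 * μ.real {x} ^ n +
        2 * (1 - μ.real {x}) * μ.real {x} ^ n := by
  rw [integral_runCount, sum_congr rfl fun i hi =>
    measureReal_pi_maximalRunSet μ x (by rw [mem_range] at hi; omega)]
  exact sum_range_ite_mul_ite _ _ h

lemma integral_runCount_pi_self (N : ℕ) :
    ∫ ω, (runCount x N ω : ℝ) ∂(Measure.pi fun _ : Fin N => μ) = μ.real {x} ^ N := by
  rw [integral_runCount, Nat.sub_self, zero_add, sum_range_one,
    measureReal_pi_maximalRunSet μ x (zero_add N).le]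
  simp

end

theorem expected_rle_savings_general {S : Type*}
    [DecidableEq S] [MeasurableSpace S] [MeasurableSingletonClass S]
    (μ : Measure S) [IsProbabilityMeasure μ] (x : S) (p : ℝ)
    (hp : (μ {x}).toReal = p) (N br : ℕ) (hN : 3 ≤ N) :
    ∫ ω : Fin N → S,
        (∑ n ∈ Finset.Icc 1 N,
          (runCount x n ω : ℝ) * ((n : ℝ) - (⌈(n : ℝ) / 2 ^ br⌉ : ℝ)))
        ∂(Measure.pi fun _ : Fin N => μ) =
      (∑ n ∈ Finset.Icc 1 (N - 2),
          ((1 - p) ^ 2 * p ^ n * ((N : ℝ) - 1 - (n : ℝ)) + 2 * p ^ n * (1 - p)) *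
            ((n : ℝ) - (⌈(n : ℝ) / 2 ^ br⌉ : ℝ))) +
        2 * p ^ (N - 1) * (1 - p) *
          (((N : ℝ) - 1) - (⌈((N : ℝ) - 1) / 2 ^ br⌉ : ℝ)) +
        p ^ N * ((N : ℝ) - (⌈(N : ℝ) / 2 ^ br⌉ : ℝ)) := by
  rw [← measureReal_def] at hp
  subst hp
  rw [integral_finsetSum _ fun n _ => (integrable_runCount _ x n).mul_const _]
  simp_rw [integral_mul_const]
  obtain ⟨M, rfl⟩ : ∃ M, N = M + 2 := ⟨N - 2, by omega⟩
  rw [sum_Icc_succ_top (by omega), sum_Icc_succ_top (by omega), Nat.add_sub_cancel,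
    show M + 2 - 1 = M + 1 by omega, integral_runCount_pi_self,
    integral_runCount_pi_of_lt μ x (by omega : M + 1 < M + 2),
    sum_congr rfl fun n hn => by
      rw [integral_runCount_pi_of_lt μ x (by rw [mem_Icc] at hn; omega : n < M + 2)]]
  rw [show ((M + 2 : ℕ) : ℝ) - 1 = ((M + 1 : ℕ) : ℝ) by push_cast; ring]
  congr 2
  · exact sum_congr rfl fun n _ => by ring
  · push_cast; ring

/-- The expected RLE savings: for an i.i.d. sequence of length `N ≥ 3` and
run-control width `b_r ≥ 1`, the expectation of
`∑_{n=1}^{N} C_n(ω) (n - ⌈n/2^{b_r}⌉)` equals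
`∑_{n=1}^{N-2} ((1-p)² pⁿ (N-1-n) + 2 pⁿ (1-p)) (n - ⌈n/2^{b_r}⌉)
  + 2 p^{N-1} (1-p) (N-1 - ⌈(N-1)/2^{b_r}⌉) + p^N (N - ⌈N/2^{b_r}⌉)`. -/
theorem expected_rle_savings {S : Type*} [Fintype S] [Nonempty S]
    [DecidableEq S] [MeasurableSpace S] [MeasurableSingletonClass S]
    (μ : Measure S) [IsProbabilityMeasure μ] (x : S) (p : ℝ)
    (hp : (μ {x}).toReal = p) (N br : ℕ) (hN : 3 ≤ N) (hbr : 1 ≤ br) :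
    ∫ ω : Fin N → S,
        (∑ n ∈ Finset.Icc 1 N,
          (runCount x n ω : ℝ) * ((n : ℝ) - (⌈(n : ℝ) / 2 ^ br⌉ : ℝ)))
        ∂(Measure.pi fun _ : Fin N => μ) =
      (∑ n ∈ Finset.Icc 1 (N - 2),
          ((1 - p) ^ 2 * p ^ n * ((N : ℝ) - 1 - (n : ℝ)) + 2 * p ^ n * (1 - p)) *
            ((n : ℝ) - (⌈(n : ℝ) / 2 ^ br⌉ : ℝ))) +
        2 * p ^ (N - 1) * (1 - p) *
          (((N : ℝ) - 1) - (⌈((N : ℝ) - 1) / 2 ^ br⌉ : ℝ)) +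
        p ^ N * ((N : ℝ) - (⌈(N : ℝ) / 2 ^ br⌉ : ℝ)) :=
  expected_rle_savings_general μ x p hp N br hN
end
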